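/- For any co-small groups G, H ≤ Aut(𝕄), letting ⟨G⟩ denote any ultraimaginary a_E with Aut(𝕄/a_E) = G (and similarly ⟨H⟩), one has ⟨G⟩ ∈ bddᵘ(⟨H⟩) if and only if G ⊇ H_f. -/

import Mathlib

open FirstOrder Cardinal

universe u v w

namespace BddUltra

variable (L : FirstOrder.Language.{u, u}) (M : Type u) [L.Structure M]

/-- The automorphism group of `M` (composition as multiplication). -/
instance : Group (M ≃[L] M) where
  mul f g := f.comp g
  one := Language.Equiv.refl L M
  inv := Language.Equiv.symm
  mul_assoc f g h := by ext x; rfl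
  one_mul f := by ext x; rfl
  mul_one f := by ext x; rfl
  inv_mul_cancel f := by ext x; exact f.toEquiv.symm_apply_apply x

/-- The cardinality `|T|` of the theory: the cardinality of the language plus `ℵ₀`. -/
def cardT : Cardinal.{u} := L.card + ℵ₀

/-- Two tuples realize the same complete type over `∅`. -/
def SameType {α : Type v} (a b : α → M) : Prop :=
  ∀ φ : L.Formula α, φ.Realize a ↔ φ.Realize b

/-- Two tuples realize the same complete type over the set `A ⊆ M` of parameters. -/
def SameTypeOver (A : Set M) {α : Type v} (a b : α → M) : Prop :=
  ∀ φ : L.Formula (↥A ⊕ α),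
    φ.Realize (Sum.elim (Subtype.val : ↥A → M) a) ↔
      φ.Realize (Sum.elim (Subtype.val : ↥A → M) b)

theorem SameType.comp {α : Type v} {γ : Type w} {a b : α → M} (h : SameType L M a b)
    (g : γ → α) : SameType L M (a ∘ g) (b ∘ g) := by
  intro φ
  have := h (φ.relabel g)
  rwa [Language.Formula.realize_relabel, Language.Formula.realize_relabel] at this

/-- An invariant equivalence relation of arity `α` on `α`-tuples from `M`. -/
structure IER (α : Type u) : Type u where
  rel : (α → M) → (α → M) → Prop
  equiv : Equivalence rel
  invariant : ∀ a b c d : α → M,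
    SameType L M (Sum.elim a b) (Sum.elim c d) → (rel a b ↔ rel c d)

def IER.setoid {α : Type u} (E : IER L M α) : Setoid (α → M) := ⟨E.rel, E.equiv⟩

/-- The pair (juxtaposition) of two invariant equivalence relations. -/
def IER.prod {α β : Type u} (E : IER L M α) (F : IER L M β) : IER L M (α ⊕ β) where
  rel x y := E.rel (x ∘ Sum.inl) (y ∘ Sum.inl) ∧ F.rel (x ∘ Sum.inr) (y ∘ Sum.inr)
  equiv := ⟨fun _ => ⟨E.equiv.refl _, F.equiv.refl _⟩,
    fun h => ⟨E.equiv.symm h.1, F.equiv.symm h.2⟩,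
    fun h h' => ⟨E.equiv.trans h.1 h'.1, F.equiv.trans h.2 h'.2⟩⟩
  invariant := by
    intro a b c d h
    have e1 : ∀ (x : α ⊕ β → M) (y : α ⊕ β → M),
        (Sum.elim x y) ∘ (Sum.map Sum.inl Sum.inl : α ⊕ α → (α ⊕ β) ⊕ (α ⊕ β))
          = Sum.elim (x ∘ Sum.inl) (y ∘ Sum.inl) := by
      intro x y; funext i; cases i <;> rfl
    have e2 : ∀ (x : α ⊕ β → M) (y : α ⊕ β → M),
        (Sum.elim x y) ∘ (Sum.map Sum.inr Sum.inr : β ⊕ β → (α ⊕ β) ⊕ (α ⊕ β))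
          = Sum.elim (x ∘ Sum.inr) (y ∘ Sum.inr) := by
      intro x y; funext i; cases i <;> rfl
    have h1 := h.comp (L := L) (M := M) (Sum.map Sum.inl Sum.inl)
    have h2 := h.comp (L := L) (M := M) (Sum.map Sum.inr Sum.inr)
    rw [e1, e1] at h1
    rw [e2, e2] at h2
    exact and_congr (E.invariant _ _ _ _ h1) (F.invariant _ _ _ _ h2)

/-- The set of automorphisms fixing the ultraimaginary `a_E`. -/
def autU {α : Type u} (E : IER L M α) (a : α → M) : Set (M ≃[L] M) :=
  {σ | E.rel a (⇑σ ∘ a)}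

/-- The set of automorphisms fixing the set `A` pointwise. -/
def autSet (A : Set M) : Set (M ≃[L] M) := {σ | ∀ x ∈ A, σ x = x}

/-- The set of automorphisms fixing the set `A` and the tuple `u` pointwise. -/
def autSetTup (A : Set M) {γ : Type v} (u : γ → M) : Set (M ≃[L] M) :=
  {σ | (∀ x ∈ A, σ x = x) ∧ ∀ i, σ (u i) = u i}

/-- The ultraimaginary `b_F` is bounded over a parameter set whose pointwise
stabilizer is `X`: the `X`-orbit of `b` meets fewer than `κ` classes of `F`. -/
def BddU (κ : Cardinal.{u}) (X : Set (M ≃[L] M)) {β : Type u} (F : IER L M β)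
    (b : β → M) : Prop :=
  ∃ S : Set (β → M), #S < κ ∧ ∀ σ ∈ X, ∃ s ∈ S, F.rel (⇑σ ∘ b) s

/-- The cardinality of the orbit of the ultraimaginary `b_F` under the set `X`
of automorphisms. -/
def orbitCard (X : Set (M ≃[L] M)) {β : Type u} (F : IER L M β) (b : β → M) :
    Cardinal.{u} :=
  #(Set.range fun σ : X => Quotient.mk F.setoid (⇑σ.1 ∘ b))

/-- `b ⫝ᵇᵘ_A c`, expressed in terms of the pointwise stabilizers `XA`, `XAb`, `XAc` of
`A`, `Ab` and `Ac`: an ultraimaginary is bounded over `Ab` and over `Ac` iff it is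
bounded over `A`. -/
def IndepBU (κ : Cardinal.{u}) (XA XAb XAc : Set (M ≃[L] M)) : Prop :=
  ∀ (δ : Type u) (H : IER L M δ) (d : δ → M),
    (BddU L M κ XAb H d ∧ BddU L M κ XAc H d) ↔ BddU L M κ XA H d

/-- The set of automorphisms fixing an elementary substructure pointwise. -/
def autES (N : L.ElementarySubstructure M) : Set (M ≃[L] M) :=
  autSet L M (N : Set M)

/-- `Autf(𝕄/x)` where `X = Aut(𝕄/x)`: the subgroup generated by all pointwise
stabilizers of small models that are contained in `X`. -/
def autfGen (κ : Cardinal.{u}) (X : Set (M ≃[L] M)) : Subgroup (M ≃[L] M) :=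
  Subgroup.closure {σ | ∃ N : L.ElementarySubstructure M,
    #(N : Set M) < κ ∧ autES L M N ⊆ X ∧ σ ∈ autES L M N}

/-- The group of Lascar strong automorphisms over the set `A ⊆ M`: generated by the
pointwise stabilizers of small models containing `A`. -/
def lascarGrp (κ : Cardinal.{u}) (A : Set M) : Subgroup (M ≃[L] M) :=
  Subgroup.closure {σ | ∃ N : L.ElementarySubstructure M,
    #(N : Set M) < κ ∧ A ⊆ (N : Set M) ∧ σ ∈ autES L M N}

/-- κ-saturation: every finitely realizable set of formulas over a parameter tuple of
arity `< κ`, in `< κ` many variables, is realized. -/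
def Saturated (κ : Cardinal.{u}) : Prop :=
  ∀ (α β : Type u), #α < κ → #β < κ → ∀ (a : α → M) (p : Set (L.Formula (α ⊕ β))),
    (∀ s : Finset (L.Formula (α ⊕ β)), ↑s ⊆ p →
      ∃ b : β → M, ∀ φ ∈ s, φ.Realize (Sum.elim a b)) →
    ∃ b : β → M, ∀ φ ∈ p, φ.Realize (Sum.elim a b)

/-- Strong κ-homogeneity: tuples of arity `< κ` with the same type over `∅` are
conjugate under an automorphism. -/
def Homog (κ : Cardinal.{u}) : Prop :=
  ∀ (α : Type u) (a b : α → M), #α < κ → SameType L M a b →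
    ∃ σ : M ≃[L] M, ∀ i, σ (a i) = b i

/-- `M` is a monster model with bound `κbar`: `κbar` is a sufficiently large
(uncountable, regular, strong limit, above `|T|`) cardinal, and `M` is
`κbar`-saturated and strongly `κbar`-homogeneous. -/
structure Monster (κbar : Cardinal.{u}) : Prop where
  aleph0_lt : ℵ₀ < κbar
  isRegular : κbar.IsRegular
  strongLimit : ∀ ρ : Cardinal.{u}, ρ < κbar → 2 ^ ρ < κbar
  lang_lt : L.card < κbar
  saturated : Saturated L M κbar
  homog : Homog L M κbar

/-- A hyperimaginary: the class of a countable tuple under a countably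
type-definable (over `∅`) equivalence relation. -/
structure Hyp : Type u where
  rep : ℕ → M
  fmls : Set (L.Formula (ℕ ⊕ ℕ))
  countable : fmls.Countable
  equiv : Equivalence fun a b : ℕ → M => ∀ φ ∈ fmls, φ.Realize (Sum.elim a b)

/-- The automorphisms fixing each hyperimaginary in the set `A`. -/
def autHyp (A : Set (Hyp L M)) : Set (M ≃[L] M) :=
  {σ | ∀ h ∈ A, ∀ φ ∈ h.fmls, φ.Realize (Sum.elim h.rep (⇑σ ∘ h.rep))}

/-- The automorphisms fixing each hyperimaginary in `A` and the tuple `u` pointwise. -/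
def autHypTup (A : Set (Hyp L M)) {γ : Type v} (u : γ → M) : Set (M ≃[L] M) :=
  {σ | σ ∈ autHyp L M A ∧ ∀ i, σ (u i) = u i}

/-- Flattening of a finite subsequence of a sequence of tuples into a single tuple. -/
def flatten {ι : Type v} {β : Type w} (f : ι → β → M) {n : ℕ} (s : Fin n → ι) :
    Fin n × β → M := fun p => f (s p.1) p.2

/-- A sequence of tuples is `A`-indiscernible (`A ⊆ M` a set of real parameters). -/
def IndiscOver (A : Set M) {ι : Type v} [Preorder ι] {β : Type w} (f : ι → β → M) : Prop :=
  ∀ (n : ℕ) (s t : Fin n → ι), StrictMono s → StrictMono t →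
    SameTypeOver L M A (flatten M f s) (flatten M f t)

/-- Two sequences have the same Ehrenfeucht–Mostowski type over `A ⊆ M`. -/
def SameEMOver (A : Set M) {ι : Type v} [Preorder ι] {ι' : Type w} [Preorder ι']
    {β : Type u} (f : ι → β → M) (g : ι' → β → M) : Prop :=
  ∀ (n : ℕ) (s : Fin n → ι) (t : Fin n → ι'), StrictMono s → StrictMono t →
    SameTypeOver L M A (flatten M f s) (flatten M g t)

/-- A sequence of tuples is `A`-indiscernible, for `A` a set of hyperimaginaries:
any two increasing tuples from the sequence are conjugate under `Aut(𝕄/A)`. -/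
def IndiscOverHyp (A : Set (Hyp L M)) {ι : Type v} [Preorder ι] {β : Type w}
    (f : ι → β → M) : Prop :=
  ∀ (n : ℕ) (s t : Fin n → ι), StrictMono s → StrictMono t →
    ∃ σ ∈ autHyp L M A, ∀ (i : Fin n) (x : β), σ (f (s i) x) = f (t i) x

/-- Two sequences have the same EM-type over the set `A` of hyperimaginaries. -/
def SameEMOverHyp (A : Set (Hyp L M)) {ι : Type v} [Preorder ι] {ι' : Type w} [Preorder ι']
    {β : Type u} (f : ι → β → M) (g : ι' → β → M) : Prop :=
  ∀ (n : ℕ) (s : Fin n → ι) (t : Fin n → ι'), StrictMono s → StrictMono t →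
    ∃ σ ∈ autHyp L M A, ∀ (i : Fin n) (x : β), σ (f (s i) x) = g (t i) x

/-- A sequence of `β`-tuples from `N`, indexed by an arbitrary small linear order. -/
structure Seq (N : Type u) (β : Type u) : Type (u + 1) where
  idx : Type u
  [ord : LinearOrder idx]
  val : idx → β → N

attribute [instance] Seq.ord

/-- Concatenation `I + J` of sequences. -/
def Seq.concat {N β : Type u} (I J : Seq N β) : Seq N β where
  idx := I.idx ⊕ₗ J.idx
  val := fun x => Sum.elim I.val J.val (ofLex x)

/-- The sequence `I` flattened into a single tuple. -/
def Seq.flat {N β : Type u} (I : Seq N β) : I.idx × β → N := fun p => I.val p.1 p.2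

/-- The image `σ · I` of a sequence under an automorphism. -/
def Seq.map {β : Type u} (σ : M ≃[L] M) (I : Seq M β) : Seq M β where
  idx := I.idx
  ord := I.ord
  val := fun i x => σ (I.val i x)

/-- The sequence `(b_i)_{i < ω}` packaged as a `Seq`. -/
def Seq.ofNat {N β : Type u} (b : ℕ → β → N) : Seq N β where
  idx := ULift.{u} ℕ
  val := fun n => b n.down

/-- `I ∼_A J`: both sequences are infinite and `I + J` or `J + I` is `A`-indiscernible. -/
def SimSeq (A : Set M) {β : Type u} (I J : Seq M β) : Prop :=
  Infinite I.idx ∧ Infinite J.idx ∧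
    (IndiscOver L M A (I.concat J).val ∨ IndiscOver L M A (J.concat I).val)

/-- `I ≈_A J`: the transitive closure of `∼_A`. -/
def ApproxSeq (A : Set M) {β : Type u} : Seq M β → Seq M β → Prop :=
  Relation.TransGen (SimSeq L M A)

/-- `I ∼_A J` for `A` a set of hyperimaginaries. -/
def SimSeqHyp (A : Set (Hyp L M)) {β : Type u} (I J : Seq M β) : Prop :=
  Infinite I.idx ∧ Infinite J.idx ∧
    (IndiscOverHyp L M A (I.concat J).val ∨ IndiscOverHyp L M A (J.concat I).val)

/-- `I ≈_A J` for `A` a set of hyperimaginaries. -/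
def ApproxSeqHyp (A : Set (Hyp L M)) {β : Type u} : Seq M β → Seq M β → Prop :=
  Relation.TransGen (SimSeqHyp L M A)

/-- `u ⫝ᵇᵘ_A v` for tuples `u`, `v` over a set `A ⊆ M` of real parameters. -/
def IndepBUReal (κ : Cardinal.{u}) (A : Set M) {γ : Type v} {δ : Type w}
    (x : γ → M) (y : δ → M) : Prop :=
  IndepBU L M κ (autSet L M A) (autSetTup L M A x) (autSetTup L M A y)

/-- `u ⫝ᵇᵘ_A v` for tuples `u`, `v` over a set `A` of hyperimaginaries. -/
def IndepBUHyp (κ : Cardinal.{u}) (A : Set (Hyp L M)) {γ : Type v} {δ : Type w}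
    (x : γ → M) (y : δ → M) : Prop :=
  IndepBU L M κ (autHyp L M A) (autHypTup L M A x) (autHypTup L M A y)

/-- A total `⫝ᵇᵘ`-Morley sequence over the set `A ⊆ M`. -/
def TotalMorleyReal (κ : Cardinal.{u}) (A : Set M) {β : Type u} (b : ℕ → β → M) : Prop :=
  IndiscOver L M A b ∧
    ∀ I J : Seq M β, #I.idx < κ → #J.idx < κ →
      SameEMOver L M A ((I.concat J).val) b →
        IndepBUReal L M κ A I.flat J.flat

/-- A total `⫝ᵇᵘ`-Morley sequence over the set `A` of hyperimaginaries. -/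
def TotalMorleyHyp (κ : Cardinal.{u}) (A : Set (Hyp L M)) {β : Type u}
    (b : ℕ → β → M) : Prop :=
  IndiscOverHyp L M A b ∧
    ∀ I J : Seq M β, #I.idx < κ → #J.idx < κ →
      SameEMOverHyp L M A ((I.concat J).val) b →
        IndepBUHyp L M κ A I.flat J.flat

/-- `tp(b/Ac)` divides over `A`. -/
def Divides (A : Set M) {β : Type v} {γ : Type w} (b : β → M) (c : γ → M) : Prop :=
  ∃ ci : ℕ → γ → M, ci 0 = c ∧ IndiscOver L M A ci ∧
    ¬∃ b' : β → M, ∀ (i : ℕ) (φ : L.Formula (↥A ⊕ (β ⊕ γ))),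
      φ.Realize (Sum.elim (Subtype.val : ↥A → M) (Sum.elim b c)) →
        φ.Realize (Sum.elim (Subtype.val : ↥A → M) (Sum.elim b' (ci i)))

/-- The partition relation `λ → (β)^{<ω}_γ`. -/
def ArrowRel (lam : Cardinal.{u}) (ot : Ordinal.{u}) (c : Cardinal.{u}) : Prop :=
  ∀ f : Finset lam.ord.ToType → c.ord.ToType,
    ∃ X : Set lam.ord.ToType, Nonempty (↥X ≃o ot.ToType) ∧
      ∀ s t : Finset lam.ord.ToType, ↑s ⊆ X → ↑t ⊆ X → s.card = t.card → f s = f t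

/-- The Lascar strong automorphism group over a set `A` of hyperimaginaries:
generated by pointwise stabilizers of small models fixing every element of `A`. -/
def lascarHypGrp (κ : Cardinal.{u}) (A : Set (Hyp L M)) : Subgroup (M ≃[L] M) :=
  Subgroup.closure {σ | ∃ N : L.ElementarySubstructure M,
    #(N : Set M) < κ ∧ autES L M N ⊆ autHyp L M A ∧ σ ∈ autES L M N}

/-- `b_F ⫝ᵇᵘ_{a_E} c_G` for ultraimaginaries. -/
def IndepU (κ : Cardinal.{u}) {α β γ : Type u} (E : IER L M α) (a : α → M)
    (F : IER L M β) (b : β → M) (G : IER L M γ) (c : γ → M) : Prop :=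
  IndepBU L M κ (autU L M E a) (autU L M E a ∩ autU L M F b)
    (autU L M E a ∩ autU L M G c)

/-!
If `Aut(𝕄/N) ⊆ H` for a small model `N`, then `H_f` is normal in `H`: conjugating `Aut(𝕄/N)`
by `σ ∈ H` gives `Aut(𝕄/σ⁻¹N) ⊆ H`. Hence if `H_f ⊆ G = Aut(𝕄/g_E)`, the class of `σ g`
(`σ ∈ H`) only depends on `tp(σ g/N)`, and there are boundedly many such types.

Conversely, let `g_E` be bounded over `H`, `Aut(𝕄/N) ⊆ H` and `σ ∈ Aut(𝕄/N)`. Take a long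
sequence `(c_i)` where `c_i` realizes the coheir of `tp(g/N)` over `N g (σ g) c_{<i}`. Then
`(c_i, c_j) ≡ (g, c_0)` for `i < j` and `(g, c_0) ≡ (σ g, c_0)`. So either `g E c_0 E σ g`, or
the `c_i` are pairwise `E`-inequivalent; but they are `Aut(𝕄/N)`-conjugates of `g`, so they
lie in the bounded `H`-orbit of `g_E`.
-/

open Language Set

variable {L M}

theorem IER.rel_comp_iff {α : Type u} (E : IER L M α) (σ : M ≃[L] M) {a b : α → M} :
    E.rel (⇑σ ∘ a) (⇑σ ∘ b) ↔ E.rel a b := by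
  refine (E.invariant _ _ _ _ fun φ => ?_).symm
  rw [← StrongHomClass.realize_formula σ, Sum.comp_elim]

theorem sameTypeOver_comp_of_mem_autSet {A : Set M} {σ : M ≃[L] M} (hσ : σ ∈ autSet L M A)
    {α : Type v} (a : α → M) : SameTypeOver L M A a (⇑σ ∘ a) := fun φ => by
  have hA : ⇑σ ∘ (Subtype.val : A → M) = Subtype.val := funext fun x => hσ x x.2
  rw [← StrongHomClass.realize_formula σ, Sum.comp_elim, hA]

theorem Homog.exists_mem_autSet_comp_eq {κ : Cardinal.{u}} (hhom : Homog L M κ) (hκ : ℵ₀ ≤ κ)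
    {A : Set M} (hA : #A < κ) {α : Type u} (hα : #α < κ) {a b : α → M}
    (h : SameTypeOver L M A a b) : ∃ τ ∈ autSet L M A, ⇑τ ∘ a = b := by
  obtain ⟨τ, hτ⟩ := hhom (A ⊕ α) (Sum.elim Subtype.val a) (Sum.elim Subtype.val b)
    (by simpa using add_lt_of_lt hκ hA hα) h
  exact ⟨τ, fun x hx => hτ (Sum.inl ⟨x, hx⟩), funext fun i => hτ (Sum.inr i)⟩

section ImageOfModel

variable {P : Type*} [L.Structure P]

noncomputable def _root_.FirstOrder.Language.ElementaryEmbedding.elementaryRange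
    {N : Type*} [L.Structure N] (f : N ↪ₑ[L] P) : L.ElementarySubstructure P where
  toSubstructure := f.toEmbedding.toHom.range
  isElementary' n φ x := by
    set e := f.toEmbedding.equivRange
    have hx : Subtype.val ∘ x = ⇑f ∘ (e.symm ∘ x) := funext fun i =>
      (congrArg Subtype.val (e.apply_symm_apply (x i))).symm.trans
        (Embedding.equivRange_apply _ _)
    have he : ⇑e ∘ (e.symm ∘ x) = x := funext fun i => e.apply_symm_apply (x i)
    rw [hx, f.map_formula, ← StrongHomClass.realize_formula e, he]

noncomputable def _root_.FirstOrder.Language.ElementarySubstructure.map (f : M ≃[L] P)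
    (N : L.ElementarySubstructure M) : L.ElementarySubstructure P :=
  (f.toElementaryEmbedding.comp N.subtype).elementaryRange

theorem _root_.FirstOrder.Language.ElementarySubstructure.coe_map (f : M ≃[L] P)
    (N : L.ElementarySubstructure M) : (N.map f : Set P) = ⇑f '' N := by
  change Set.range (⇑f ∘ Subtype.val) = _
  rw [Set.range_comp, Subtype.range_coe]

end ImageOfModel

theorem mem_autES_map_iff (σ : M ≃[L] M) (N : L.ElementarySubstructure M) (π : M ≃[L] M) :
    π ∈ autES L M (N.map σ) ↔ σ⁻¹ * π * σ ∈ autES L M N := by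
  simp only [autES, autSet, ElementarySubstructure.coe_map, forall_mem_image]
  refine forall₂_congr fun x _ => ?_
  exact (σ.symm.injective.eq_iff' (σ.symm_apply_apply x)).symm

theorem inv_mul_mul_mem_autfGen {κ : Cardinal.{u}} {H : Subgroup (M ≃[L] M)}
    {N : L.ElementarySubstructure M} (hN : #(N : Set M) < κ)
    (hNH : autES L M N ⊆ (H : Set (M ≃[L] M))) {σ ρ : M ≃[L] M} (hσ : σ ∈ H)
    (hρ : ρ ∈ autES L M N) : σ⁻¹ * ρ * σ ∈ autfGen L M κ (H : Set (M ≃[L] M)) := by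
  refine Subgroup.subset_closure ⟨N.map σ⁻¹, ?_, fun π hπ => ?_, ?_⟩
  · rwa [ElementarySubstructure.coe_map, mk_image_eq (EquivLike.injective _)]
  · have hconj := hNH ((mem_autES_map_iff _ _ _).1 hπ)
    rw [inv_inv] at hconj
    simpa [mul_assoc] using H.mul_mem (H.mul_mem (H.inv_mem hσ) hconj) hσ
  · rwa [mem_autES_map_iff, inv_inv, ← mul_assoc, ← mul_assoc, mul_inv_cancel, one_mul,
      mul_assoc, mul_inv_cancel, mul_one]

theorem mk_formula_lt {κ : Cardinal.{u}} (hκ : ℵ₀ < κ) (hL : L.card < κ) {γ : Type u}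
    (hγ : #γ < κ) : #(L.Formula γ) < κ := by
  have hinj : #(L.Formula γ) ≤ #(Σ n, L.BoundedFormula γ n) :=
    mk_le_of_injective (sigma_mk_injective (β := L.BoundedFormula γ) (i := 0))
  refine (hinj.trans BoundedFormula.card_le).trans_lt ?_
  simpa using max_lt hκ (add_lt_of_lt hκ.le hγ hL)

theorem bddU_of_sameTypeOver_imp_rel {κ : Cardinal.{u}} (mon : Monster L M κ) {A : Set M}
    (hA : #A < κ) {α : Type u} (hα : #α < κ) {X : Set (M ≃[L] M)} {E : IER L M α}
    {g : α → M}
    (h : ∀ σ ∈ X, ∀ τ ∈ X, SameTypeOver L M A (⇑σ ∘ g) (⇑τ ∘ g) →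
      E.rel (⇑σ ∘ g) (⇑τ ∘ g)) :
    BddU L M κ X E g := by
  let tp : (M ≃[L] M) → Set (L.Formula (A ⊕ α)) :=
    fun σ => {φ | φ.Realize (Sum.elim Subtype.val (⇑σ ∘ g))}
  refine ⟨(fun t => ⇑(Function.invFunOn tp X t) ∘ g) '' (tp '' X), ?_, fun σ hσ => ?_⟩
  · calc #((fun t => ⇑(Function.invFunOn tp X t) ∘ g) '' (tp '' X))
        ≤ #(Set (L.Formula (A ⊕ α))) := mk_image_le.trans (mk_set_le _)
      _ = 2 ^ #(L.Formula (A ⊕ α)) := mk_set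
      _ < κ := mon.strongLimit _ <| mk_formula_lt mon.aleph0_lt mon.lang_lt <| by
          simpa using add_lt_of_lt mon.aleph0_lt.le hA hα
  · have hex : ∃ τ ∈ X, tp τ = tp σ := ⟨σ, hσ, rfl⟩
    refine ⟨_, mem_image_of_mem _ (mem_image_of_mem tp hσ),
      h σ hσ _ (Function.invFunOn_mem hex) fun φ => ?_⟩
    exact (Set.ext_iff.1 (Function.invFunOn_eq hex) φ).symm

theorem bddU_of_autfGen_subset {κ : Cardinal.{u}} (mon : Monster L M κ)
    {H : Subgroup (M ≃[L] M)} {N : L.ElementarySubstructure M} (hN : #(N : Set M) < κ)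
    (hNH : autES L M N ⊆ (H : Set (M ≃[L] M))) {α : Type u} (hα : #α < κ) {E : IER L M α}
    {g : α → M}
    (hfix : (autfGen L M κ (H : Set (M ≃[L] M)) : Set (M ≃[L] M)) ⊆ autU L M E g) :
    BddU L M κ H E g := by
  refine bddU_of_sameTypeOver_imp_rel mon hN hα fun σ hσ τ _ hστ => ?_
  obtain ⟨ρ, hρ, hρστ⟩ := mon.homog.exists_mem_autSet_comp_eq mon.aleph0_lt.le hN hα hστ
  have hg : E.rel g (⇑(σ⁻¹ * ρ * σ) ∘ g) := hfix (inv_mul_mul_mem_autfGen hN hNH hσ hρ)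
  have hτg : ⇑τ ∘ g = ⇑σ ∘ (⇑(σ⁻¹ * ρ * σ) ∘ g) := by
    rw [← hρστ]
    funext x
    exact (σ.apply_symm_apply _).symm
  rwa [hτg, E.rel_comp_iff]

/-- `tp(c/e) = lim_U tp(n/e)`, `n` ranging over tuples from `A`. For the ultrafilter of
`exists_ultrafilter_realizesLimitType` these are the coheirs of `tp(g/N)`. -/
def RealizesLimitType (L : FirstOrder.Language.{u, u}) {M : Type u} [L.Structure M] {A : Set M}
    {α : Type v} {β : Type w} (U : Ultrafilter (α → A)) (e : β → M) (c : α → M) : Prop :=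
  ∀ θ : L.Formula (β ⊕ α), θ.Realize (Sum.elim e c) ↔
    ∀ᶠ n in (U : Filter (α → A)), θ.Realize (Sum.elim e (Subtype.val ∘ n))

section LimitTypes

variable {A : Set M} {α : Type v} {β : Type w} {U : Ultrafilter (α → A)}

theorem RealizesLimitType.comp {e : β → M} {c : α → M} (h : RealizesLimitType L U e c)
    {γ : Type*} (m : γ → β) : RealizesLimitType L U (e ∘ m) c := by
  intro θ
  have hrel : ∀ x : α → M,
      (θ.relabel (Sum.map m id)).Realize (Sum.elim e x) ↔ θ.Realize (Sum.elim (e ∘ m) x) :=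
    fun x => by rw [Formula.realize_relabel, Sum.elim_comp_map, Function.comp_id]
  simp only [← hrel]
  exact h _

theorem SameTypeOver.realize_sum_iff {γ : Type*} {a b : γ → M} (h : SameTypeOver L M A a b)
    (θ : L.Formula (γ ⊕ α)) (n : α → A) :
    θ.Realize (Sum.elim a (Subtype.val ∘ n)) ↔ θ.Realize (Sum.elim b (Subtype.val ∘ n)) := by
  have := h (θ.relabel (Sum.elim Sum.inr (Sum.inl ∘ n)))
  simpa only [Formula.realize_relabel, Sum.comp_elim, Sum.elim_comp_inr, ← Function.comp_assoc,
    Sum.elim_comp_inl] using this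

theorem RealizesLimitType.sameType {γ : Type*} {w w' : γ → M} {c c' : α → M}
    (h : RealizesLimitType L U w c) (h' : RealizesLimitType L U w' c')
    (hw : SameTypeOver L M A w w') : SameType L M (Sum.elim w c) (Sum.elim w' c') := fun θ => by
  rw [h θ, h' θ]
  exact Filter.eventually_congr (.of_forall (hw.realize_sum_iff θ))

end LimitTypes

theorem Saturated.exists_realizesLimitType {κ : Cardinal.{u}} (hsat : Saturated L M κ)
    {A : Set M} {α β : Type u} (hα : #α < κ) (hβ : #β < κ) (U : Ultrafilter (α → A))
    (e : β → M) : ∃ c, RealizesLimitType L U e c := by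
  obtain ⟨c, hc⟩ := hsat β α hβ hα e
    {θ | ∀ᶠ n in (U : Filter (α → A)), θ.Realize (Sum.elim e (Subtype.val ∘ n))} fun s hs =>
      let ⟨n, hn⟩ := ((Filter.eventually_all_finset s).2 fun θ hθ => hs hθ).exists
      ⟨Subtype.val ∘ n, hn⟩
  refine ⟨c, fun θ => ⟨fun hθ => ?_, hc θ⟩⟩
  by_contra hU
  have hnot := hc θ.not <| (U.eventually_not.2 hU).mono fun n hn => Formula.realize_not.2 hn
  exact Formula.realize_not.1 hnot hθ

theorem Saturated.exists_seq_realizesLimitType {κ : Cardinal.{u}} (hsat : Saturated L M κ)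
    (hκ : ℵ₀ ≤ κ) {A : Set M} {α β ι : Type u} [LinearOrder ι] [WellFoundedLT ι]
    (hα : #α < κ) (hβ : #β < κ) (hι : #ι < κ) (U : Ultrafilter (α → A)) (e : β → M) :
    ∃ c : ι → α → M, ∀ i, RealizesLimitType L U e (c i) ∧
      ∀ j < i, RealizesLimitType L U (Sum.elim e (c j)) (c i) := by
  have hpar : ∀ i : ι, #(β ⊕ {j // j < i} × α) < κ := fun i => by
    simpa using add_lt_of_lt hκ hβ
      (mul_lt_of_lt hκ ((mk_subtype_le _).trans_lt hι) hα)
  let c : ι → α → M := WellFoundedLT.fix fun i prev => Classical.choose <|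
    hsat.exists_realizesLimitType hα (hpar i) U
      (Sum.elim e fun p : {j // j < i} × α => prev p.1 p.1.2 p.2)
  have hc : ∀ i,
      RealizesLimitType L U (Sum.elim e fun p : {j // j < i} × α => c p.1 p.2) (c i) := fun i => by
      rw [show c i = _ from WellFoundedLT.fix_eq _ i]
      exact Classical.choose_spec (hsat.exists_realizesLimitType hα (hpar i) U _)
  refine ⟨c, fun i => ⟨(hc i).comp Sum.inl, fun j hj => ?_⟩⟩
  have := (hc i).comp (Sum.elim Sum.inl fun x => Sum.inr (⟨j, hj⟩, x))
  rwa [Sum.comp_elim, Sum.elim_comp_inl] at this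

theorem exists_realize_of_realize (N : L.ElementarySubstructure M) [Nonempty N] {γ : Type*}
    (ψ : L.Formula ((N : Set M) ⊕ γ)) {a : γ → M} (h : ψ.Realize (Sum.elim Subtype.val a)) :
    ∃ n : γ → (N : Set M), ψ.Realize (Sum.elim Subtype.val (Subtype.val ∘ n)) := by
  classical
  let t := ψ.freeVarFinset.toRight
  let f : ψ.freeVarFinset → (N : Set M) ⊕ t := fun
    | ⟨.inl m, _⟩ => .inl m
    | ⟨.inr y, hy⟩ => .inr ⟨y, Finset.mem_toRight.2 hy⟩
  let φ : L.Formula ((N : Set M) ⊕ t) := ψ.restrictFreeVar f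
  have hM : (φ.iExs t).Realize (Subtype.val : N → M) := Formula.realize_iExs.2
    ⟨a ∘ Subtype.val,
      (BoundedFormula.realize_restrictFreeVar _ (by rintro ⟨_ | _, _⟩ <;> rfl)).2 h⟩
  obtain ⟨w, hw⟩ := Formula.realize_iExs.1 ((N.subtype.map_formula (φ.iExs t) id).1 hM)
  have hwM := (N.subtype.map_formula φ _).2 hw
  rw [Sum.comp_elim] at hwM
  obtain ⟨n₀⟩ := ‹Nonempty N›
  refine ⟨fun y => if hy : y ∈ t then w ⟨y, hy⟩ else n₀,
    (BoundedFormula.realize_restrictFreeVar _ ?_).1 hwM⟩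
  rintro ⟨_ | y, hy⟩
  · rfl
  · have hyt : y ∈ t := Finset.mem_toRight.2 hy
    simp [f, hyt]

/-- The coheir ultrafilter: `tp(g/N)` is finitely satisfiable in the model `N`. -/
theorem exists_ultrafilter_realizesLimitType (N : L.ElementarySubstructure M) [Nonempty N]
    {α : Type v} (g : α → M) :
    ∃ U : Ultrafilter (α → (N : Set M)),
      RealizesLimitType L U (Subtype.val : ↥(N : Set M) → M) g := by
  let F : Filter (α → (N : Set M)) :=
    { sets := {s | ∃ ψ : L.Formula ((N : Set M) ⊕ α), ψ.Realize (Sum.elim Subtype.val g) ∧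
        {n | ψ.Realize (Sum.elim Subtype.val (Subtype.val ∘ n))} ⊆ s}
      univ_sets := ⟨⊤, Formula.realize_top.2 trivial, subset_univ _⟩
      sets_of_superset := fun ⟨ψ, hψ, hs⟩ hst => ⟨ψ, hψ, hs.trans hst⟩
      inter_sets := fun ⟨ψ, hψ, hs⟩ ⟨χ, hχ, ht⟩ => ⟨ψ ⊓ χ, Formula.realize_inf.2 ⟨hψ, hχ⟩,
        fun n hn => ⟨hs (Formula.realize_inf.1 hn).1, ht (Formula.realize_inf.1 hn).2⟩⟩ }
  have : F.NeBot := ⟨fun hbot => by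
    obtain ⟨ψ, hψ, hempty⟩ := Filter.empty_mem_iff_bot.2 hbot
    obtain ⟨n, hn⟩ := exists_realize_of_realize N ψ hψ
    exact hempty hn⟩
  have hU : ∀ ψ : L.Formula ((N : Set M) ⊕ α), ψ.Realize (Sum.elim Subtype.val g) →
      ∀ᶠ n in (Ultrafilter.of F : Filter (α → (N : Set M))),
        ψ.Realize (Sum.elim Subtype.val (Subtype.val ∘ n)) :=
    fun ψ hψ => Ultrafilter.of_le F ⟨ψ, hψ, subset_rfl⟩
  refine ⟨Ultrafilter.of F, fun ψ => ⟨hU ψ, fun hψ => by_contra fun hnot => ?_⟩⟩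
  exact Ultrafilter.eventually_not.1
    ((hU ψ.not (Formula.realize_not.2 hnot)).mono fun n hn => Formula.realize_not.1 hn) hψ

theorem mk_le_of_pairwise_not_rel {X : Set (M ≃[L] M)} {α : Type u} {E : IER L M α}
    {g : α → M} {S : Set (α → M)} (hS : ∀ σ ∈ X, ∃ s ∈ S, E.rel (⇑σ ∘ g) s) {ι : Type u}
    {c : ι → α → M} (hc : ∀ i, ∃ σ ∈ X, ⇑σ ∘ g = c i)
    (hne : Pairwise fun i j => ¬E.rel (c i) (c j)) : #ι ≤ #S := by
  have hcS : ∀ i, ∃ s ∈ S, E.rel (c i) s := fun i => by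
    obtain ⟨σ, hσ, hσg⟩ := hc i
    exact hσg ▸ hS σ hσ
  choose s hsS hs using hcS
  refine mk_le_of_injective (f := fun i => (⟨s i, hsS i⟩ : S)) fun i j hij => ?_
  by_contra hij'
  have hsij : s i = s j := congrArg Subtype.val hij
  exact hne hij' (E.equiv.trans (hs i) (hsij ▸ E.equiv.symm (hs j)))

theorem autES_subset_autU_of_bddU {κ : Cardinal.{u}} (mon : Monster L M κ) {α : Type u}
    (hα : #α < κ) {X : Set (M ≃[L] M)} {E : IER L M α} {g : α → M} (hbdd : BddU L M κ X E g)
    {N : L.ElementarySubstructure M} (hN : #(N : Set M) < κ) (hNX : autES L M N ⊆ X) :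
    autES L M N ⊆ autU L M E g := by
  intro σ hσ
  obtain ⟨S, hS, hcover⟩ := hbdd
  rcases isEmpty_or_nonempty α with hα0 | ⟨⟨x₀⟩⟩
  · show E.rel g (⇑σ ∘ g)
    rw [Subsingleton.elim (⇑σ ∘ g) g]
    exact E.equiv.refl g
  have : Nonempty M := ⟨g x₀⟩
  have hκ := mon.aleph0_lt.le
  let ι := ((2 : Cardinal) ^ #S).ord.ToType
  have hι : #ι = 2 ^ #S := mk_ord_toType _
  obtain ⟨U, hU⟩ := exists_ultrafilter_realizesLimitType N g
  obtain ⟨c, hc⟩ := mon.saturated.exists_seq_realizesLimitType hκ (ι := ι) hα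
    (by simpa using add_lt_of_lt hκ hN (add_lt_of_lt hκ hα hα))
    (hι ▸ mon.strongLimit _ hS) U (Sum.elim Subtype.val (Sum.elim g (⇑σ ∘ g)))
  have hcN : ∀ i, SameTypeOver L M N g (c i) := fun i =>
    hU.sameType ((hc i).1.comp Sum.inl) fun _ => Iff.rfl
  have hgσg : SameTypeOver L M N g (⇑σ ∘ g) := sameTypeOver_comp_of_mem_autSet hσ g
  obtain ⟨i₀⟩ : Nonempty ι := mk_ne_zero_iff.1 (hι ▸ (power_pos _ two_pos).ne')
  by_cases hgc : E.rel g (c i₀)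
  · have hpair := ((hc i₀).1.comp (Sum.inr ∘ Sum.inl)).sameType
      ((hc i₀).1.comp (Sum.inr ∘ Sum.inr)) hgσg
    exact E.equiv.trans hgc (E.equiv.symm ((E.invariant _ _ _ _ hpair).1 hgc))
  · refine absurd (mk_le_of_pairwise_not_rel hcover (c := c) (fun i => ?_) ?_)
      (hι ▸ (cantor _).not_ge)
    · obtain ⟨τ, hτ, hτg⟩ :=
        mon.homog.exists_mem_autSet_comp_eq hκ hN hα (hcN i)
      exact ⟨τ, hNX hτ, hτg⟩
    · have hlt : ∀ i j, i < j → ¬E.rel (c i) (c j) := fun i j hij hrel =>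
        hgc <| (E.invariant _ _ _ _ <| ((hc i₀).1.comp (Sum.inr ∘ Sum.inl)).sameType
          (((hc j).2 i hij).comp Sum.inr) (hcN i)).2 hrel
      intro i j hij hrel
      rcases hij.lt_or_gt with h | h
      · exact hlt i j h hrel
      · exact hlt j i h (E.equiv.symm hrel)

theorem statement_6_general (L : FirstOrder.Language.{u, u}) (M : Type u) [L.Structure M]
    (κbar : Cardinal.{u}) (_mon : Monster L M κbar)
    (G H : Subgroup (M ≃[L] M))
    (hH : ∃ N : L.ElementarySubstructure M, #(N : Set M) < κbar ∧
      autES L M N ⊆ (H : Set (M ≃[L] M)))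
    {α : Type u} (hα : #α < κbar)
    (E : IER L M α) (g : α → M)
    (hEg : autU L M E g = (G : Set (M ≃[L] M))) :
    BddU L M κbar (H : Set (M ≃[L] M)) E g ↔
      autfGen L M κbar (H : Set (M ≃[L] M)) ≤ G := by
  constructor
  · intro hbdd
    refine (Subgroup.closure_le G).2 ?_
    rintro σ ⟨N, hN, hNH, hσ⟩
    rw [← hEg]
    exact autES_subset_autU_of_bddU _mon hα hbdd hN hNH hσ
  · intro hle
    obtain ⟨N, hN, hNH⟩ := hH
    exact bddU_of_autfGen_subset _mon hN hNH hα (hEg ▸ hle)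

/-- For co-small subgroups `G, H ≤ Aut(𝕄)` and ultraimaginaries
`⟨G⟩ = g_E`, `⟨H⟩ = h_F` with `Aut(𝕄/g_E) = G` and `Aut(𝕄/h_F) = H`, one has
`⟨G⟩ ∈ bddᵘ(⟨H⟩)` if and only if `G ⊇ H_f`. -/
theorem statement_6 (L : FirstOrder.Language.{u, u}) (M : Type u) [L.Structure M]
    (κbar : Cardinal.{u}) (_mon : Monster L M κbar)
    (G H : Subgroup (M ≃[L] M))
    (hG : ∃ N : L.ElementarySubstructure M, #(N : Set M) < κbar ∧
      autES L M N ⊆ (G : Set (M ≃[L] M)))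
    (hH : ∃ N : L.ElementarySubstructure M, #(N : Set M) < κbar ∧
      autES L M N ⊆ (H : Set (M ≃[L] M)))
    {α β : Type u} (hα : #α < κbar) (hβ : #β < κbar)
    (E : IER L M α) (g : α → M) (F : IER L M β) (h : β → M)
    (hEg : autU L M E g = (G : Set (M ≃[L] M)))
    (hFh : autU L M F h = (H : Set (M ≃[L] M))) :
    BddU L M κbar (H : Set (M ≃[L] M)) E g ↔
      autfGen L M κbar (H : Set (M ≃[L] M)) ≤ G :=
  statement_6_general L M κbar _mon G H hH hα E g hEg

end BddUltra
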